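/- Suppose each f_j : ℝ^d → ℝ (j = 1,…,n) is convex, differentiable, and M_j-smooth with M_j symmetric positive semidefinite, and let f = (1/n)∑_j f_j. Then for all x, y: D_f(x,y) ≥ (1/(2n)) ∑_{j=1}^n ‖∇f_j(x) - ∇f_j(y)‖²_{M_j†}, where D_f(x,y) = f(x) - f(y) - ⟨∇f(y), x - y⟩. -/

import Mathlib

/-!
Fix `j` and put `v = ∇f_j(x) - ∇f_j(y)`, `s = M_j† v`. Convexity of `f_j` at `x - s` against `y`,
and `M_j`-smoothness at `x - s` against `x`, sandwich `f_j(x - s)` and give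
`D_{f_j}(x, y) ≥ ⟨v, s⟩ - ½ ⟨s, M_j s⟩ = ½ ‖v‖²_{M_j†}`, because `M_j†` is symmetric and
`M_j† M_j M_j† = M_j†`. Averaging over `j` gives the claim, since `D_f` is the average of the `D_{f_j}`.
-/

open Matrix

theorem IsSelfAdjoint.of_isMoorePenroseInverse {R : Type*} [Semigroup R] [StarMul R] {a b : R}
    (ha : IsSelfAdjoint a) (h₁ : a * b * a = a) (h₂ : b * a * b = b)
    (h₃ : IsSelfAdjoint (a * b)) (h₄ : IsSelfAdjoint (b * a)) : IsSelfAdjoint b := by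
  have hab : star b * a = a * b := by simpa [star_mul, ha.star_eq] using h₃.star_eq
  have hba : a * star b = b * a := by simpa [star_mul, ha.star_eq] using h₄.star_eq
  -- both `a * b` and `b * a` equal `(a * b) * (b * a)`
  have hcomm : b * a = a * b :=
    calc b * a = a * b * a * star b := by rw [h₁, hba]
      _ = a * b * (a * star b) := mul_assoc _ _ _
      _ = star b * a * (b * a) := by rw [hba, ← hab]
      _ = a * b := by rw [mul_assoc, ← mul_assoc a b a, h₁, hab]
  show star b = b
  calc star b = star (b * a * b) := by rw [h₂]
    _ = star b * a * star b := by simp only [star_mul, ha.star_eq, mul_assoc]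
    _ = b := by rw [mul_assoc, hba, hcomm, ← mul_assoc, hab, ← hcomm, h₂]

theorem Matrix.isSelfAdjoint_iff_transpose_eq {n : Type*} (A : Matrix n n ℝ) :
    IsSelfAdjoint A ↔ Aᵀ = A := by
  rw [IsSelfAdjoint, star_eq_conjTranspose, conjTranspose_eq_transpose_of_trivial]

theorem Matrix.transpose_eq_of_isMoorePenroseInverse {n : Type*} [Fintype n]
    {A B : Matrix n n ℝ} (hA : Aᵀ = A) (h₁ : A * B * A = A) (h₂ : B * A * B = B)
    (h₃ : (A * B)ᵀ = A * B) (h₄ : (B * A)ᵀ = B * A) : Bᵀ = B := by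
  simp only [← isSelfAdjoint_iff_transpose_eq] at *
  exact hA.of_isMoorePenroseInverse h₁ h₂ h₃ h₄

section Bregman

variable {ι : Type*} [Fintype ι]

/-- The Bregman divergence `D_f(x, y)`, with `g` standing for `∇f`. -/
def bregmanDiv (f : (ι → ℝ) → ℝ) (g : (ι → ℝ) → ι → ℝ) (x y : ι → ℝ) : ℝ :=
  f x - f y - g y ⬝ᵥ (x - y)

theorem pinv_quadForm_gradient_sub_le_two_mul_bregmanDiv
    {f : (ι → ℝ) → ℝ} {g : (ι → ℝ) → ι → ℝ} {M P : Matrix ι ι ℝ}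
    (hP : Pᵀ = P) (hPMP : P * M * P = P)
    (hconv : ∀ x y, f y + g y ⬝ᵥ (x - y) ≤ f x)
    (hsmooth : ∀ x y, f x ≤ f y + g y ⬝ᵥ (x - y) + (1 / 2) * ((x - y) ⬝ᵥ M *ᵥ (x - y)))
    (x y : ι → ℝ) :
    P *ᵥ (g x - g y) ⬝ᵥ (g x - g y) ≤ 2 * bregmanDiv f g x y := by
  set v := g x - g y
  set s := P *ᵥ v with hs
  have hquad : s ⬝ᵥ M *ᵥ s = P *ᵥ v ⬝ᵥ v := by
    rw [hs, mulVec_mulVec, ← vecMul_transpose, hP, ← dotProduct_mulVec, mulVec_mulVec,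
      ← mul_assoc, hPMP]
    exact dotProduct_mulVec v P v
  have hlin : g x ⬝ᵥ s - g y ⬝ᵥ s = P *ᵥ v ⬝ᵥ v := by
    rw [← sub_dotProduct, dotProduct_comm]
  have hlower := hconv (x - s) y
  have hupper := hsmooth (x - s) x
  rw [show x - s - y = x - y - s by abel, dotProduct_sub] at hlower
  rw [show x - s - x = -s by abel, dotProduct_neg, neg_dotProduct, mulVec_neg, dotProduct_neg,
    neg_neg] at hupper
  unfold bregmanDiv
  linarith

end Bregman

theorem avg_bregman_ge_pinv_norms_general {d n : ℕ}
    (f : Fin n → (Fin d → ℝ) → ℝ) (g : Fin n → (Fin d → ℝ) → (Fin d → ℝ))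
    (M Mdag : Fin n → Matrix (Fin d) (Fin d) ℝ)
    (hMsymm : ∀ j, (M j)ᵀ = M j)
    (hP1 : ∀ j, M j * Mdag j * M j = M j) (hP2 : ∀ j, Mdag j * M j * Mdag j = Mdag j)
    (hP3 : ∀ j, (M j * Mdag j)ᵀ = M j * Mdag j) (hP4 : ∀ j, (Mdag j * M j)ᵀ = Mdag j * M j)
    (hconv : ∀ j, ∀ x y : Fin d → ℝ, f j y + g j y ⬝ᵥ (x - y) ≤ f j x)
    (hsmooth : ∀ j, ∀ x y : Fin d → ℝ,
      f j x ≤ f j y + g j y ⬝ᵥ (x - y) + (1/2) * ((x - y) ⬝ᵥ (M j).mulVec (x - y))) :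
    ∀ x y : Fin d → ℝ,
      (1 / (2 * (n : ℝ))) * ∑ j, (Mdag j).mulVec (g j x - g j y) ⬝ᵥ (g j x - g j y)
        ≤ (n : ℝ)⁻¹ * ∑ j, f j x - ((n : ℝ)⁻¹ * ∑ j, f j y)
          - ((n : ℝ)⁻¹ • ∑ j, g j y) ⬝ᵥ (x - y) := by
  intro x y
  have hMdag j : (Mdag j)ᵀ = Mdag j :=
    transpose_eq_of_isMoorePenroseInverse (hMsymm j) (hP1 j) (hP2 j) (hP3 j) (hP4 j)
  calc (1 / (2 * (n : ℝ))) * ∑ j, Mdag j *ᵥ (g j x - g j y) ⬝ᵥ (g j x - g j y)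
      = (n : ℝ)⁻¹ * ∑ j, (1 / 2) * (Mdag j *ᵥ (g j x - g j y) ⬝ᵥ (g j x - g j y)) := by
        rw [← Finset.mul_sum]; ring
    _ ≤ (n : ℝ)⁻¹ * ∑ j, bregmanDiv (f j) (g j) x y := by
        gcongr with j
        linarith [pinv_quadForm_gradient_sub_le_two_mul_bregmanDiv (hMdag j) (hP2 j) (hconv j)
          (hsmooth j) x y]
    _ = _ := by
        simp only [bregmanDiv, Finset.sum_sub_distrib, ← sum_dotProduct, smul_dotProduct,
          smul_eq_mul]
        ring

/-- For `f = (1/n) ∑ f_j` with each `f_j` convex and `M_j`-smooth,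
`D_f(x,y) ≥ (1/(2n)) ∑_j ‖∇f_j(x) - ∇f_j(y)‖²_{M_j†}`. -/
theorem avg_bregman_ge_pinv_norms {d n : ℕ} (hn : 0 < n)
    (f : Fin n → (Fin d → ℝ) → ℝ) (g : Fin n → (Fin d → ℝ) → (Fin d → ℝ))
    (M Mdag : Fin n → Matrix (Fin d) (Fin d) ℝ)
    (hMsymm : ∀ j, (M j)ᵀ = M j)
    (hMpsd : ∀ j, ∀ v : Fin d → ℝ, 0 ≤ v ⬝ᵥ (M j).mulVec v)
    (hP1 : ∀ j, M j * Mdag j * M j = M j) (hP2 : ∀ j, Mdag j * M j * Mdag j = Mdag j)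
    (hP3 : ∀ j, (M j * Mdag j)ᵀ = M j * Mdag j) (hP4 : ∀ j, (Mdag j * M j)ᵀ = Mdag j * M j)
    (hconv : ∀ j, ∀ x y : Fin d → ℝ, f j y + g j y ⬝ᵥ (x - y) ≤ f j x)
    (hsmooth : ∀ j, ∀ x y : Fin d → ℝ,
      f j x ≤ f j y + g j y ⬝ᵥ (x - y) + (1/2) * ((x - y) ⬝ᵥ (M j).mulVec (x - y))) :
    ∀ x y : Fin d → ℝ,
      (1 / (2 * (n : ℝ))) * ∑ j, (Mdag j).mulVec (g j x - g j y) ⬝ᵥ (g j x - g j y)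
        ≤ (n : ℝ)⁻¹ * ∑ j, f j x - ((n : ℝ)⁻¹ * ∑ j, f j y)
          - ((n : ℝ)⁻¹ • ∑ j, g j y) ⬝ᵥ (x - y) :=
  avg_bregman_ge_pinv_norms_general f g M Mdag hMsymm hP1 hP2 hP3 hP4 hconv hsmooth
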